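/- arXiv:2109.06721 — 2 statements merged into one kernel-verified Lean document; each statement's English description precedes it below -/
import Mathlib

section
/- Let q be a prime power and F a field with q^2 elements, let n be a positive integer dividing q − 1, and let ω ∈ F be a primitive n-th root of unity. Let e_0,…,e_{n−1} be the rows of the Fourier matrix F_n built from ω, let r > ⌊n/2⌋, and let C be the code spanned by e_0, e_1, …, e_{r−1}. Then C contains its Hermitian dual: every x ∈ F^n satisfying Σ_{k=0}^{n−1} x_k c_k^q = 0 for all c ∈ C lies in C. (The key point is that since q ≡ 1 (mod n), raising each entry of e_i to the q-th power returns e_i.) -/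
/-!
Since `n ∣ q - 1`, the Frobenius `c ↦ c ^ q` fixes every power of `ω`, so orthogonality of `x` to
the generators says that the Fourier coefficients `∑ₖ xₖ ω^{jk}` of `x` vanish for `j < r`.
Fourier inversion writes `x = ∑ᵢ yᵢ eᵢ` with `yᵢ = n⁻¹ ∑ₖ xₖ ω^{-ik} = n⁻¹ ∑ₖ xₖ ω^{(n-i)k}`, and
for `r ≤ i < n` we have `n - i ≤ n - r < r` because `2r > n`, so `yᵢ = 0`.
-/

open Finset

section FourierMatrix

variable {F : Type*} [Field F] {n : ℕ} {ω : F}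

def fourierRow (ω : F) (n i : ℕ) : Fin n → F := fun j => ω ^ (i * j)

lemma pow_pow_eq_self_of_dvd_sub_one {M : Type*} [Monoid M] {ζ : M} {q : ℕ} (hζ : ζ ^ n = 1)
    (hq : 0 < q) (hdvd : n ∣ q - 1) (a : ℕ) : (ζ ^ a) ^ q = ζ ^ a := by
  obtain ⟨c, hc⟩ := hdvd
  calc (ζ ^ a) ^ q = (ζ ^ a) ^ (q - 1) * ζ ^ a := by rw [← pow_succ, Nat.sub_add_cancel hq]
    _ = ζ ^ a := by rw [hc, ← pow_mul, mul_comm a, pow_mul, pow_mul, hζ, one_pow, one_pow, one_mul]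

lemma sum_fin_pow_eq_zero_of_pow_eq_one {z : F} (hz : z ^ n = 1) (hz_one : z ≠ 1) :
    ∑ i : Fin n, z ^ (i : ℕ) = 0 := by
  rw [Fin.sum_univ_eq_sum_range (z ^ ·), geom_sum_eq hz_one, hz, sub_self, zero_div]

lemma IsPrimitiveRoot.sum_inv_pow_mul_pow (hω : IsPrimitiveRoot ω n) (k m : Fin n) :
    ∑ i : Fin n, ω⁻¹ ^ (i * k : ℕ) * ω ^ (i * m : ℕ) = if k = m then (n : F) else 0 := by
  have hω₀ : ω ≠ 0 := hω.ne_zero (Fin.pos k).ne'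
  split_ifs with hkm
  · subst hkm
    simp [hω₀]
  set z := ω ^ (m : ℕ) * (ω ^ (k : ℕ))⁻¹
  have hz : z ^ n = 1 := by
    rw [mul_pow, inv_pow, ← pow_mul, ← pow_mul, mul_comm _ n, mul_comm _ n, pow_mul, pow_mul,
      hω.pow_eq_one, one_pow, one_pow, inv_one, mul_one]
  have hz_one : z ≠ 1 := fun h => hkm <| Fin.ext <|
    hω.pow_inj k.isLt m.isLt ((mul_inv_eq_one₀ (pow_ne_zero _ hω₀)).mp h).symm
  calc ∑ i : Fin n, ω⁻¹ ^ (i * k : ℕ) * ω ^ (i * m : ℕ) = ∑ i : Fin n, z ^ (i : ℕ) := by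
        refine sum_congr rfl fun i _ => ?_
        rw [mul_comm (i : ℕ), mul_comm (i : ℕ), pow_mul, pow_mul, inv_pow, mul_pow, mul_comm]
    _ = 0 := sum_fin_pow_eq_zero_of_pow_eq_one hz hz_one

theorem IsPrimitiveRoot.eq_sum_smul_fourierRow (hω : IsPrimitiveRoot ω n) (hn : (n : F) ≠ 0)
    (x : Fin n → F) :
    x = ∑ i : Fin n, ((n : F)⁻¹ * ∑ k, x k * ω⁻¹ ^ (i * k : ℕ)) • fourierRow ω n i := by
  funext m
  simp only [Finset.sum_apply, Pi.smul_apply, smul_eq_mul, fourierRow]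
  calc x m = ∑ k, (n : F)⁻¹ * x k * (if k = m then (n : F) else 0) := by
        simp [mul_right_comm _ (x m), inv_mul_cancel₀ hn]
    _ = ∑ k, (n : F)⁻¹ * x k * ∑ i : Fin n, ω⁻¹ ^ (i * k : ℕ) * ω ^ (i * m : ℕ) := by
        simp only [hω.sum_inv_pow_mul_pow]
    _ = _ := by
        simp only [mul_sum, sum_mul]
        rw [sum_comm]
        exact sum_congr rfl fun _ _ => sum_congr rfl fun _ _ => by ring

lemma IsPrimitiveRoot.inv_pow_mul_eq (hω : IsPrimitiveRoot ω n) {i : ℕ} (hi : i ≤ n) (k : ℕ) :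
    ω⁻¹ ^ (i * k) = ω ^ ((n - i) * k) := by
  have h : ω ^ (n - i) * ω ^ i = 1 := by rw [← pow_add, Nat.sub_add_cancel hi, hω.pow_eq_one]
  rw [pow_mul, pow_mul, eq_inv_of_mul_eq_one_left h, inv_pow]

end FourierMatrix

theorem stmt7_general (q : ℕ) (hq : IsPrimePow q) (F : Type*) [Field F]
    (n : ℕ) (hn : 0 < n) (hdvd : n ∣ q - 1)
    (ω : F) (hω : IsPrimitiveRoot ω n) (r : ℕ) (hr : n / 2 < r)
    (C : Submodule F (Fin n → F))
    (hC : C = Submodule.span F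
      (Set.range fun i : Fin r => fun j : Fin n => ω ^ (i.val * j.val))) :
    ∀ x : Fin n → F, (∀ c ∈ C, ∑ k : Fin n, x k * c k ^ q = 0) → x ∈ C := by
  intro x hx
  have row_mem (i : ℕ) (hi : i < r) : fourierRow ω n i ∈ C :=
    hC ▸ Submodule.subset_span ⟨⟨i, hi⟩, rfl⟩
  have coeff_eq_zero (j : ℕ) (hj : j < r) : ∑ k : Fin n, x k * ω ^ (j * k : ℕ) = 0 := by
    simpa only [fourierRow, pow_pow_eq_self_of_dvd_sub_one hω.pow_eq_one hq.pos hdvd]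
      using hx _ (row_mem j hj)
  have : NeZero n := ⟨hn.ne'⟩
  rw [hω.eq_sum_smul_fourierRow hω.neZero'.out x]
  refine C.sum_mem fun i _ => ?_
  by_cases hir : (i : ℕ) < r
  · exact C.smul_mem _ (row_mem i hir)
  · have hi : ∑ k, x k * ω⁻¹ ^ (i * k : ℕ) = 0 := by
      simp only [hω.inv_pow_mul_eq i.isLt.le]
      exact coeff_eq_zero _ (by omega)
    rw [hi, mul_zero, zero_smul]
    exact C.zero_mem

/-- Over `F = GF(q²)` with `n ∣ q - 1` and `ω` a primitive `n`-th root of unity, the code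
spanned by the first `r > ⌊n/2⌋` rows of the Fourier matrix contains its Hermitian dual:
any `x` with `∑_k x_k c_k^q = 0` for all codewords `c` lies in the code. -/
theorem stmt7 (q : ℕ) (hq : IsPrimePow q) (F : Type*) [Field F] [Fintype F]
    (hF : Fintype.card F = q ^ 2) (n : ℕ) (hn : 0 < n) (hdvd : n ∣ q - 1)
    (ω : F) (hω : IsPrimitiveRoot ω n) (r : ℕ) (hr : n / 2 < r) (hrn : r ≤ n)
    (C : Submodule F (Fin n → F))
    (hC : C = Submodule.span F
      (Set.range fun i : Fin r => fun j : Fin n => ω ^ (i.val * j.val))) :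
    ∀ x : Fin n → F, (∀ c ∈ C, ∑ k : Fin n, x k * c k ^ q = 0) → x ∈ C :=
  stmt7_general q hq F n hn hdvd ω hω r hr C hC
end

section
/- Let F be a field, n a positive integer whose image in F is nonzero, ω ∈ F a primitive n-th root of unity, e_0,…,e_{n−1} the rows of the Fourier matrix F_n, and f_j = (1, ω^{−j}, …, ω^{−(n−1)j})^T. Let r > ⌊n/2⌋, A the r×n matrix with rows e_0,…,e_{r−1}, and B the r×n matrix whose first 2r−n rows are zero and whose last n−r rows are e_r,…,e_{n−1}. Let C_0 be the n×(n−r) matrix with columns f_r, f_{r+1}, …, f_{n−1} and C_1 the n×(n−r) matrix with columns f_{2r−n}, f_{2r−n+1}, …, f_{r−1}. Then (A + Bz)·(C_0 − C_1 z) = 0; that is, H^T[z] = C_0 − C_1 z is a control (check) matrix for the convolutional code generated by G[z] = A + Bz. -/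
/-!
Write `G[z] = A + zB` and `H[z] = C₀ - zC₁`, so that
`G H = A C₀ + z (B C₀ - A C₁) - z² B C₁`. Every entry of these three products is a pairing
`e_a · f_b = ∑_j (ω^a ω^{-b})^j`, which is `n` if `a = b` and a vanishing geometric sum otherwise.
The row indices of `A` and `B` and the column indices of `C₀` and `C₁` are placed so that
`A C₀ = B C₁ = 0` and `B C₀ = A C₁ = n · (the indicator of s = 2r - n + c)`; the last
identity relies on `2r - n` not being truncated.
-/

open Polynomial Matrix

theorem IsPrimitiveRoot.sum_pow_mul_inv_pow {F : Type*} [Field F] {n : ℕ} {ω : F}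
    (hω : IsPrimitiveRoot ω n) {a b : ℕ} (ha : a < n) (hb : b < n) :
    ∑ j : Fin n, ω ^ (a * j) * ω⁻¹ ^ (b * j) = if a = b then (n : F) else 0 := by
  have hωb : ω ^ b ≠ 0 := pow_ne_zero b (hω.ne_zero (by omega))
  have hterm (j : ℕ) : ω ^ (a * j) * ω⁻¹ ^ (b * j) = (ω ^ a * (ω ^ b)⁻¹) ^ j := by
    rw [pow_mul, pow_mul, mul_pow, inv_pow]
  simp only [hterm]
  rw [Fin.sum_univ_eq_sum_range (fun j ↦ (ω ^ a * (ω ^ b)⁻¹) ^ j) n]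
  split_ifs with hab
  · simp [hab, mul_inv_cancel₀ hωb]
  · have hζ1 : ω ^ a * (ω ^ b)⁻¹ ≠ 1 :=
      fun h ↦ hab <| hω.pow_inj ha hb <| (mul_inv_eq_one₀ hωb).mp h
    have hζn : (ω ^ a * (ω ^ b)⁻¹) ^ n = 1 := by
      rw [mul_pow, inv_pow, ← pow_mul, ← pow_mul, mul_comm a, mul_comm b, pow_mul, pow_mul,
        hω.pow_eq_one, one_pow, one_pow, inv_one, mul_one]
    rw [geom_sum_eq hζ1, hζn, sub_self, zero_div]

theorem Matrix.map_C_add_X_smul_mul_map_C_sub_X_smul_eq_zero {R : Type*} [CommRing R]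
    {l m p : Type*} [Fintype m] {A B : Matrix l m R} {C₀ C₁ : Matrix m p R}
    (hA : A * C₀ = 0) (hB : B * C₁ = 0) (hBA : B * C₀ = A * C₁) :
    (A.map C + (X : R[X]) • B.map C) * (C₀.map C - (X : R[X]) • C₁.map C) = 0 := by
  simp only [Matrix.add_mul, Matrix.mul_sub, Matrix.smul_mul, Matrix.mul_smul, ← Matrix.map_mul,
    hA, hB, hBA, Matrix.map_zero _ (map_zero C), smul_zero, zero_add, add_zero, sub_self]

namespace FourierConvolutionalCode

variable {F : Type*} [Field F] (ω : F) (n r : ℕ)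

def genA : Matrix (Fin r) (Fin n) F :=
  of fun s j ↦ ω ^ (s.val * j.val)

def genB : Matrix (Fin r) (Fin n) F :=
  of fun s j ↦ if s.val < 2 * r - n then 0 else ω ^ ((s.val + (n - r)) * j.val)

def checkC₀ : Matrix (Fin n) (Fin (n - r)) F :=
  of fun j c ↦ ω⁻¹ ^ ((r + c.val) * j.val)

def checkC₁ : Matrix (Fin n) (Fin (n - r)) F :=
  of fun j c ↦ ω⁻¹ ^ ((2 * r - n + c.val) * j.val)

variable {ω n r}

theorem genA_mul_checkC₀ (hω : IsPrimitiveRoot ω n) : genA ω n r * checkC₀ ω n r = 0 := by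
  ext s c
  have := c.isLt
  simp only [Matrix.mul_apply, genA, checkC₀, of_apply, Matrix.zero_apply]
  rw [hω.sum_pow_mul_inv_pow (by omega) (by omega), if_neg (by omega)]

theorem genB_mul_checkC₁ (hω : IsPrimitiveRoot ω n) : genB ω n r * checkC₁ ω n r = 0 := by
  ext s c
  have := c.isLt
  simp only [Matrix.mul_apply, genB, checkC₁, of_apply, Matrix.zero_apply]
  by_cases hs : s.val < 2 * r - n
  · simp only [if_pos hs, zero_mul, Finset.sum_const_zero]
  · simp only [if_neg hs]
    rw [hω.sum_pow_mul_inv_pow (by omega) (by omega), if_neg (by omega)]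

theorem genB_mul_checkC₀ (hω : IsPrimitiveRoot ω n) (hr : n ≤ 2 * r) :
    genB ω n r * checkC₀ ω n r = genA ω n r * checkC₁ ω n r := by
  ext s c
  have := c.isLt
  simp only [Matrix.mul_apply, genA, genB, checkC₀, checkC₁, of_apply]
  rw [hω.sum_pow_mul_inv_pow (a := s) (by omega) (by omega)]
  by_cases hs : s.val < 2 * r - n
  · simp only [if_pos hs, zero_mul, Finset.sum_const_zero]
    rw [if_neg (by omega)]
  · simp only [if_neg hs]
    rw [hω.sum_pow_mul_inv_pow (by omega) (by omega)]
    exact if_congr (by omega) rfl rfl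

end FourierConvolutionalCode

open FourierConvolutionalCode in
theorem stmt13_general (F : Type*) [Field F] (n r : ℕ)
    (ω : F) (hω : IsPrimitiveRoot ω n)
    (hr : n / 2 < r)
    (G : Matrix (Fin r) (Fin n) (Polynomial F))
    (hG : ∀ (s : Fin r) (j : Fin n), G s j =
      Polynomial.C (ω ^ (s.val * j.val)) +
        Polynomial.C (if s.val < 2 * r - n then 0
          else ω ^ ((s.val + (n - r)) * j.val)) * Polynomial.X)
    (H : Matrix (Fin n) (Fin (n - r)) (Polynomial F))
    (hH : ∀ (j : Fin n) (c : Fin (n - r)), H j c =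
      Polynomial.C (ω⁻¹ ^ ((r + c.val) * j.val)) -
        Polynomial.C (ω⁻¹ ^ ((2 * r - n + c.val) * j.val)) * Polynomial.X) :
    G * H = 0 := by
  have hG' : G = (genA ω n r).map C + (X : F[X]) • (genB ω n r).map C := by
    refine Matrix.ext fun s j ↦ ?_
    simp only [hG, genA, genB, Matrix.add_apply, Matrix.smul_apply, map_apply, of_apply,
      smul_eq_mul]
    ring
  have hH' : H = (checkC₀ ω n r).map C - (X : F[X]) • (checkC₁ ω n r).map C := by
    refine Matrix.ext fun j c ↦ ?_
    simp only [hH, checkC₀, checkC₁, Matrix.sub_apply, Matrix.smul_apply, map_apply, of_apply,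
      smul_eq_mul]
    ring
  rw [hG', hH']
  exact map_C_add_X_smul_mul_map_C_sub_X_smul_eq_zero (genA_mul_checkC₀ hω)
    (genB_mul_checkC₁ hω) (genB_mul_checkC₀ hω (by omega))

/-- A control matrix for the convolutional code generated by `G[z] = A + Bz`: with `C₀`
the matrix with columns `f_r, …, f_{n-1}` and `C₁` the matrix with columns
`f_{2r-n}, …, f_{r-1}`, one has `G[z]·(C₀ - C₁ z) = 0`. -/
theorem stmt13 (F : Type*) [Field F] (n r : ℕ) (hn : 0 < n)
    (hchar : (n : F) ≠ 0) (ω : F) (hω : IsPrimitiveRoot ω n)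
    (hr : n / 2 < r) (hrn : r ≤ n)
    (G : Matrix (Fin r) (Fin n) (Polynomial F))
    (hG : ∀ (s : Fin r) (j : Fin n), G s j =
      Polynomial.C (ω ^ (s.val * j.val)) +
        Polynomial.C (if s.val < 2 * r - n then 0
          else ω ^ ((s.val + (n - r)) * j.val)) * Polynomial.X)
    (H : Matrix (Fin n) (Fin (n - r)) (Polynomial F))
    (hH : ∀ (j : Fin n) (c : Fin (n - r)), H j c =
      Polynomial.C (ω⁻¹ ^ ((r + c.val) * j.val)) -
        Polynomial.C (ω⁻¹ ^ ((2 * r - n + c.val) * j.val)) * Polynomial.X) :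
    G * H = 0 :=
  stmt13_general F n r ω hω hr G hG H hH
end
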